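/- arXiv:2009.09656 — 4 statements merged into one kernel-verified Lean document; each statement's English description precedes it below -/
import Mathlib

section
/- Let δ ∈ (0,1) and let G be a simple graph on n vertices with minimal degree at least δn, with P the transition matrix of the simple random walk on G and eigenvalues 1 = λ₁ ≥ λ₂ ≥ … ≥ λₙ ≥ −1. Then every diagonal entry of P² is at most 1/(δn), hence the trace of P² is at most 1/δ, and consequently the number of indices i with λᵢ > 1/2 is at most 4/δ. -/
/-!
Since `P` is stochastic, `(P²) v v = ∑ u, P v u * P u v` is an average of the entries
`P u v ≤ 1 / deg u ≤ 1 / (δ n)`; summing over the `n` vertices bounds the trace by `1 / δ`.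
Conjugation by `D^{1/2}`, with `D` the degree matrix, turns `P` into the symmetric matrix
`D^{-1/2} A D^{-1/2}` (this is the self-adjointness of `P` in `L²(π)`), so by the spectral theorem
`tr P² = ∑ i, λᵢ²`. Every `λᵢ > 1/2` contributes more than `1/4` to this sum.
-/

open scoped Classical

noncomputable section

namespace Paper

variable {V : Type} [Fintype V] [DecidableEq V]

/-- The degree of a vertex `v` in a simple graph `G`. -/
def deg (G : SimpleGraph V) (v : V) : ℕ := Nat.card {u | G.Adj v u}

/-- The transition matrix of the simple random walk on `G`. -/
def transMat (G : SimpleGraph V) : Matrix V V ℝ :=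
  fun v u => if G.Adj v u then (deg G v : ℝ)⁻¹ else 0

end Paper

open Polynomial Finset

namespace Matrix

variable {n : Type*} [Fintype n]

theorem mul_apply_le_of_mem_rowStochastic [DecidableEq n] {R : Type*} [Semiring R]
    [PartialOrder R] [IsOrderedRing R] {A B : Matrix n n R} (hA : A ∈ rowStochastic R n)
    {c : R} {i j : n} (hB : ∀ k, B k j ≤ c) : (A * B) i j ≤ c :=
  calc (A * B) i j = ∑ k, A i k * B k j := mul_apply
    _ ≤ ∑ k, A i k * c := by
      gcongr with k
      · exact nonneg_of_mem_rowStochastic hA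
      · exact hB k
    _ = c := by rw [← Finset.sum_mul, sum_row_of_mem_rowStochastic hA, one_mul]

theorem trace_le_card_mul_of_diag_le {R : Type*} [AddCommMonoid R] [Preorder R]
    [AddLeftMono R] {A : Matrix n n R} {c : R} (h : ∀ i, A i i ≤ c) :
    A.trace ≤ Fintype.card n • c :=
  Finset.sum_le_card_nsmul _ _ _ fun i _ => h i

variable [DecidableEq n] {𝕜 : Type*} [RCLike 𝕜]

theorem IsHermitian.trace_pow_eq_sum_roots_charpoly_pow {S : Matrix n n 𝕜} (hS : S.IsHermitian)
    (k : ℕ) : (S ^ k).trace = (S.charpoly.roots.map (· ^ k)).sum := by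
  rw [hS.roots_charpoly_eq_eigenvalues, Multiset.map_map]
  conv_lhs => rw [hS.spectral_theorem, ← map_pow, Unitary.conjStarAlgAut_apply, trace_mul_cycle,
    Unitary.coe_star_mul_self, one_mul, diagonal_pow, trace_diagonal]
  rfl

theorem trace_pow_eq_sum_roots_charpoly_pow_of_isHermitian_conj {A : Matrix n n 𝕜}
    (M : (Matrix n n 𝕜)ˣ) (hM : ((M : Matrix n n 𝕜) * A * (↑M⁻¹ : Matrix n n 𝕜)).IsHermitian)
    (k : ℕ) : (A ^ k).trace = (A.charpoly.roots.map (· ^ k)).sum := by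
  rw [← trace_units_conj M, ← Units.conj_pow, ← charpoly_units_conj M A, ← coe_units_inv]
  exact hM.trace_pow_eq_sum_roots_charpoly_pow k

end Matrix

theorem Polynomial.roots_fintype_prod_X_sub_C {K ι : Type*} [Field K] [Fintype ι] (a : ι → K) :
    (∏ i, (X - C (a i))).roots = Finset.univ.val.map a := by
  rw [roots_prod _ _ (Finset.prod_ne_zero_iff.mpr fun i _ => X_sub_C_ne_zero (a i))]
  simp

theorem Nat.card_setOf_lt_mul_sq_le_sum_sq {ι : Type*} [Fintype ι] (f : ι → ℝ) {t : ℝ}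
    (ht : 0 ≤ t) : (Nat.card {i | t < f i} : ℝ) * t ^ 2 ≤ ∑ i, f i ^ 2 := by
  rw [Nat.card_eq_card_toFinset, Set.toFinset_ofPred, ← nsmul_eq_mul]
  calc #{i | t < f i} • t ^ 2 ≤ ∑ i ∈ {i | t < f i}, f i ^ 2 :=
        card_nsmul_le_sum _ _ _ fun i hi => pow_le_pow_left₀ ht (mem_filter.mp hi).2.le 2
    _ ≤ ∑ i, f i ^ 2 := sum_le_univ_sum_of_nonneg fun i => sq_nonneg (f i)

namespace Paper

variable {V : Type}

theorem transMat_le_inv_deg (G : SimpleGraph V) (v u : V) :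
    transMat G v u ≤ (deg G v : ℝ)⁻¹ := by
  simp only [transMat]; split_ifs
  exacts [le_rfl, by positivity]

variable [Fintype V]

theorem deg_eq_card (G : SimpleGraph V) (v : V) : deg G v = #{u | G.Adj v u} := by
  rw [deg, Nat.card_eq_fintype_card, Fintype.card_subtype]
  rfl

variable [DecidableEq V]

theorem transMat_mem_rowStochastic {G : SimpleGraph V} (hG : ∀ v, 0 < deg G v) :
    transMat G ∈ Matrix.rowStochastic ℝ V := by
  refine Matrix.mem_rowStochastic_iff_sum.mpr ⟨fun v u => ?_, fun v => ?_⟩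
  · simp only [transMat]; split_ifs <;> positivity
  · simp only [transMat]
    rw [← Finset.sum_filter, Finset.sum_const, ← deg_eq_card, nsmul_eq_mul,
      mul_inv_cancel₀ (by exact_mod_cast (hG v).ne')]

def sqrtDegMat (G : SimpleGraph V) (hG : ∀ v, 0 < deg G v) : (Matrix V V ℝ)ˣ where
  val := Matrix.diagonal fun v => √(deg G v)
  inv := Matrix.diagonal fun v => (√(deg G v))⁻¹
  val_inv := by
    rw [Matrix.diagonal_mul_diagonal, ← Matrix.diagonal_one]
    congr 1; funext v; exact mul_inv_cancel₀ (Real.sqrt_ne_zero'.mpr (by exact_mod_cast hG v))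
  inv_val := by
    rw [Matrix.diagonal_mul_diagonal, ← Matrix.diagonal_one]
    congr 1; funext v; exact inv_mul_cancel₀ (Real.sqrt_ne_zero'.mpr (by exact_mod_cast hG v))

theorem sqrtDegMat_conj_transMat_apply (G : SimpleGraph V) (hG : ∀ v, 0 < deg G v) (v u : V) :
    ((sqrtDegMat G hG : Matrix V V ℝ) * transMat G * (↑(sqrtDegMat G hG)⁻¹ : Matrix V V ℝ)) v u =
      if G.Adj v u then (√(deg G v) * √(deg G u))⁻¹ else 0 := by
  simp only [sqrtDegMat, Units.inv_mk, Matrix.mul_diagonal, Matrix.diagonal_mul, transMat]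
  split_ifs
  · rw [← div_eq_mul_inv (√(deg G v : ℝ)), Real.sqrt_div_self', one_div, mul_inv]
  · simp

theorem isHermitian_sqrtDegMat_conj_transMat (G : SimpleGraph V) (hG : ∀ v, 0 < deg G v) :
    ((sqrtDegMat G hG : Matrix V V ℝ) * transMat G *
      (↑(sqrtDegMat G hG)⁻¹ : Matrix V V ℝ)).IsHermitian :=
  Matrix.IsHermitian.ext fun v u => by
    simp only [sqrtDegMat_conj_transMat_apply, G.adj_comm, mul_comm, star_trivial]

theorem trace_sq_eigenvalue_bound_general (δ : ℝ) (hδ0 : 0 < δ)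
    (G : SimpleGraph V)
    (hdeg : ∀ v : V, δ * (Fintype.card V : ℝ) ≤ (deg G v : ℝ))
    (lam : Fin (Fintype.card V) → ℝ)
    (hchar : (transMat G).charpoly =
      ∏ i : Fin (Fintype.card V), (Polynomial.X - Polynomial.C (lam i))) :
    (∀ v : V, ((transMat G ^ 2) v v : ℝ) ≤ 1 / (δ * (Fintype.card V : ℝ))) ∧
    Matrix.trace (transMat G ^ 2) ≤ 1 / δ ∧
    (Nat.card {i : Fin (Fintype.card V) | 1 / 2 < lam i} : ℝ) ≤ 4 / δ := by
  have hmin_pos : ∀ v : V, 0 < δ * (Fintype.card V : ℝ) := fun v =>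
    mul_pos hδ0 (Nat.cast_pos.mpr (Fintype.card_pos_iff.mpr ⟨v⟩))
  have hdeg_pos : ∀ v, 0 < deg G v := fun v =>
    Nat.cast_pos.mp ((hmin_pos v).trans_le (hdeg v))
  have hdiag : ∀ v, (transMat G ^ 2) v v ≤ 1 / (δ * Fintype.card V) := fun v => by
    rw [sq]
    refine Matrix.mul_apply_le_of_mem_rowStochastic (transMat_mem_rowStochastic hdeg_pos) fun u =>
      (transMat_le_inv_deg G u v).trans ?_
    rw [one_div]
    exact inv_anti₀ (hmin_pos u) (hdeg u)
  have htrace : (transMat G ^ 2).trace ≤ 1 / δ := by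
    refine (Matrix.trace_le_card_mul_of_diag_le hdiag).trans ?_
    rw [nsmul_eq_mul, show ∀ n : ℝ, n * (1 / (δ * n)) = n / n * (1 / δ) by intro n; ring]
    exact mul_le_of_le_one_left (by positivity) (div_self_le_one _)
  have hsum : (transMat G ^ 2).trace = ∑ i, lam i ^ 2 := by
    rw [Matrix.trace_pow_eq_sum_roots_charpoly_pow_of_isHermitian_conj _
      (isHermitian_sqrtDegMat_conj_transMat G hdeg_pos), hchar,
      Polynomial.roots_fintype_prod_X_sub_C, Multiset.map_map]
    rfl
  refine ⟨hdiag, htrace, ?_⟩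
  have hcount := (Nat.card_setOf_lt_mul_sq_le_sum_sq lam (t := 1 / 2) (by norm_num)).trans
    (hsum ▸ htrace)
  rw [le_div_iff₀ hδ0] at hcount ⊢
  linarith

/-- Let `G` be a simple graph on `n` vertices with minimal degree at
least `δn`, let `P` be the transition matrix of the simple random walk on `G`, and let
`lam : Fin n → ℝ` enumerate the eigenvalues of `P` (with multiplicity, in nonincreasing
order, all lying in `[-1,1]`; enumeration with multiplicity is expressed through the
factorization of the characteristic polynomial).  Then every diagonal entry of `P²` is
at most `1/(δn)`, the trace of `P²` is at most `1/δ`, and the number of indices `i` with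
`λᵢ > 1/2` is at most `4/δ`. -/
theorem trace_sq_eigenvalue_bound (δ : ℝ) (hδ0 : 0 < δ) (hδ1 : δ < 1)
    (G : SimpleGraph V)
    (hdeg : ∀ v : V, δ * (Fintype.card V : ℝ) ≤ (deg G v : ℝ))
    (lam : Fin (Fintype.card V) → ℝ)
    (hmono : Antitone lam)
    (hub : ∀ i, lam i ≤ 1) (hlb : ∀ i, -1 ≤ lam i)
    (hchar : (transMat G).charpoly =
      ∏ i : Fin (Fintype.card V), (Polynomial.X - Polynomial.C (lam i))) :
    (∀ v : V, ((transMat G ^ 2) v v : ℝ) ≤ 1 / (δ * (Fintype.card V : ℝ))) ∧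
    Matrix.trace (transMat G ^ 2) ≤ 1 / δ ∧
    (Nat.card {i : Fin (Fintype.card V) | 1 / 2 < lam i} : ℝ) ≤ 4 / δ :=
  trace_sq_eigenvalue_bound_general δ hδ0 G hdeg lam hchar

end Paper
end
end

section
/- Let G = (V,E) be a finite connected graph and let W₀ = (G,w⁰) and W₁ = (G,w¹) be two networks on G (allowing self-loops) such that there is a vertex v ∈ V with w⁰(v,v) < w¹(v,v) and w⁰(e) = w¹(e) for every other edge e ≠ (v,v). Let γ⁰ and γ¹ denote the spectral gaps of the random walks on W₀ and W₁ respectively. Then γ¹ ≤ γ⁰. -/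
open scoped Classical

noncomputable section

namespace Paper

variable {V : Type} [Fintype V]

/-- Rayleigh quotients of `P` over unit functions orthogonal to constants in `L²(m)`;
its supremum is the second largest eigenvalue `λ₂`. -/
def rayleigh (P : Matrix V V ℝ) (m : V → ℝ) : Set ℝ :=
  {r | ∃ f : V → ℝ, (∑ v, m v * f v) = 0 ∧ (∑ v, m v * f v ^ 2) = 1 ∧
       r = ∑ v, m v * f v * (∑ u, P v u * f u)}

/-- The spectral gap `1 - λ₂` of `P` (reversible with respect to the weights `m`). -/
def matGap (P : Matrix V V ℝ) (m : V → ℝ) : ℝ := 1 - sSup (rayleigh P m)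

/-- The transition matrix of the random walk on a network with (symmetric) edge weights
`W` (diagonal entries are weights of self-loops): from `v`, move to `u` with probability
proportional to `W v u`. -/
def netP (W : V → V → ℝ) : Matrix V V ℝ :=
  fun v u => W v u / ∑ x, W v x

/-- The spectral gap of the random walk on the network with edge weights `W`; the walk
is reversible with respect to `π(v) ∝ w_v = Σ_u W v u`. -/
def netGap (W : V → V → ℝ) : ℝ := matGap (netP W) fun v => ∑ x, W v x

lemma sum_P_eq (W : V → V → ℝ) (hpos : ∀ v, 0 < ∑ x, W v x) (f : V → ℝ) :
    ∑ v, (∑ x, W v x) * f v * (∑ u, netP W v u * f u)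
      = ∑ v, ∑ u, W v u * f v * f u := by
  refine Finset.sum_congr rfl fun v _ => ?_
  rw [Finset.mul_sum]
  refine Finset.sum_congr rfl fun u _ => ?_
  have h := (hpos v).ne'
  simp only [netP]
  field_simp

lemma mem_ray_iff (W : V → V → ℝ) (hpos : ∀ v, 0 < ∑ x, W v x) (r : ℝ) :
    r ∈ rayleigh (netP W) (fun v => ∑ x, W v x) ↔
      ∃ f : V → ℝ, (∑ v, (∑ x, W v x) * f v) = 0 ∧ (∑ v, (∑ x, W v x) * f v ^ 2) = 1 ∧
        r = ∑ v, ∑ u, W v u * f v * f u := by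
  constructor
  · rintro ⟨f, h1, h2, h3⟩
    exact ⟨f, h1, h2, by rw [h3, sum_P_eq W hpos]⟩
  · rintro ⟨f, h1, h2, h3⟩
    refine ⟨f, h1, h2, ?_⟩
    rw [sum_P_eq W hpos]
    exact h3

lemma sum_swap_eq (W : V → V → ℝ) (hsym : ∀ u v, W u v = W v u) (g : V → ℝ) :
    ∑ v, ∑ u, W v u * g u = ∑ u, (∑ x, W u x) * g u := by
  rw [Finset.sum_comm]
  refine Finset.sum_congr rfl fun u _ => ?_
  rw [Finset.sum_mul]
  exact Finset.sum_congr rfl fun v _ => by rw [hsym]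

lemma sum_left_eq (W : V → V → ℝ) (g : V → ℝ) :
    ∑ v, ∑ u, W v u * g v = ∑ v, (∑ x, W v x) * g v := by
  refine Finset.sum_congr rfl fun v _ => ?_
  rw [Finset.sum_mul]

lemma Q_le_sum (W : V → V → ℝ) (hsym : ∀ u v, W u v = W v u) (hnn : ∀ u v, 0 ≤ W u v)
    (f : V → ℝ) :
    ∑ v, ∑ u, W v u * f v * f u ≤ ∑ v, (∑ x, W v x) * f v ^ 2 := by
  have A := sum_left_eq W (fun v => f v ^ 2)
  have B := sum_swap_eq W hsym (fun v => f v ^ 2)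
  have key : 0 ≤ ∑ v, ∑ u, (W v u * f v ^ 2 + W v u * f u ^ 2 - 2 * (W v u * f v * f u)) := by
    refine Finset.sum_nonneg fun v _ => Finset.sum_nonneg fun u _ => ?_
    have h : W v u * f v ^ 2 + W v u * f u ^ 2 - 2 * (W v u * f v * f u)
        = W v u * (f v - f u) ^ 2 := by ring
    rw [h]; exact mul_nonneg (hnn v u) (sq_nonneg _)
  have split : ∑ v, ∑ u, (W v u * f v ^ 2 + W v u * f u ^ 2 - 2 * (W v u * f v * f u))
      = (∑ v, ∑ u, W v u * f v ^ 2) + (∑ v, ∑ u, W v u * f u ^ 2)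
        - 2 * (∑ v, ∑ u, W v u * f v * f u) := by
    rw [Finset.mul_sum, ← Finset.sum_add_distrib, ← Finset.sum_sub_distrib]
    refine Finset.sum_congr rfl fun v _ => ?_
    rw [Finset.mul_sum, ← Finset.sum_add_distrib, ← Finset.sum_sub_distrib]
  linarith [A, B, key, split]

lemma ray_bddAbove (W : V → V → ℝ) (hsym : ∀ u v, W u v = W v u)
    (hnn : ∀ u v, 0 ≤ W u v) (hpos : ∀ v, 0 < ∑ x, W v x) :
    BddAbove (rayleigh (netP W) (fun v => ∑ x, W v x)) := by
  refine ⟨1, fun r hr => ?_⟩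
  rw [mem_ray_iff W hpos] at hr
  obtain ⟨f, h1, h2, h3⟩ := hr
  calc r = ∑ v, ∑ u, W v u * f v * f u := h3
    _ ≤ ∑ v, (∑ x, W v x) * f v ^ 2 := Q_le_sum W hsym hnn f
    _ = 1 := h2

lemma Q_shift (W : V → V → ℝ) (hsym : ∀ u v, W u v = W v u) (f : V → ℝ) (c : ℝ) :
    ∑ v, ∑ u, W v u * (f v - c) * (f u - c)
      = (∑ v, ∑ u, W v u * f v * f u)
        - 2 * c * (∑ v, (∑ x, W v x) * f v) + c ^ 2 * (∑ v, ∑ x, W v x) := by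
  have h1 := sum_swap_eq W hsym f
  have h2 := sum_left_eq W f
  have expand : ∑ v, ∑ u, W v u * (f v - c) * (f u - c)
      = (∑ v, ∑ u, W v u * f v * f u) - c * (∑ v, ∑ u, W v u * f u)
        - c * (∑ v, ∑ u, W v u * f v) + c ^ 2 * (∑ v, ∑ u, W v u) := by
    rw [Finset.mul_sum, Finset.mul_sum, Finset.mul_sum, ← Finset.sum_sub_distrib,
      ← Finset.sum_sub_distrib, ← Finset.sum_add_distrib]
    refine Finset.sum_congr rfl fun v _ => ?_
    rw [Finset.mul_sum, Finset.mul_sum, Finset.mul_sum, ← Finset.sum_sub_distrib,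
      ← Finset.sum_sub_distrib, ← Finset.sum_add_distrib]
    exact Finset.sum_congr rfl fun u _ => by ring
  rw [expand, h1, h2]
  ring

lemma feas_normalize (m : V → ℝ) (f : V → ℝ) (c t : ℝ)
    (hS : ∑ v, m v * f v = c * ∑ v, m v)
    (ht : t ^ 2 = ∑ v, m v * (f v - c) ^ 2) (htpos : 0 < t) :
    (∑ v, m v * ((f v - c) / t)) = 0 ∧ (∑ v, m v * ((f v - c) / t) ^ 2) = 1 := by
  have e1 : ∀ v, m v * ((f v - c) / t) = (m v * f v - c * m v) / t := fun v => by ring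
  have e2 : ∀ v, m v * ((f v - c) / t) ^ 2 = m v * (f v - c) ^ 2 / t ^ 2 := fun v => by
    rw [div_pow]; ring
  constructor
  · rw [Finset.sum_congr rfl fun v _ => e1 v, ← Finset.sum_div, Finset.sum_sub_distrib,
      ← Finset.mul_sum, hS, sub_self, zero_div]
  · rw [Finset.sum_congr rfl fun v _ => e2 v, ← Finset.sum_div, ← ht,
      div_self (pow_ne_zero 2 htpos.ne')]


/-- **Claim 2.7.**  Let `W₀`, `W₁` be weights of two networks on the same finite
connected graph (self-loops allowed) which agree except that the self-loop weight at one
vertex `v₀` is strictly larger in `W₁`.  Then the spectral gap of the walk on `W₁` is at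
most that of the walk on `W₀`. -/
theorem netGap_le_of_selfloop_increase
    (W0 W1 : V → V → ℝ)
    (hsym0 : ∀ u v, W0 u v = W0 v u) (hsym1 : ∀ u v, W1 u v = W1 v u)
    (hnn0 : ∀ u v, 0 ≤ W0 u v) (hnn1 : ∀ u v, 0 ≤ W1 u v)
    (hconn : (SimpleGraph.fromRel fun u v => W0 u v ≠ 0).Connected)
    (hpos : ∀ v, 0 < ∑ x, W0 v x)
    (v0 : V) (hlt : W0 v0 v0 < W1 v0 v0)
    (hagree : ∀ u v, ¬(u = v0 ∧ v = v0) → W0 u v = W1 u v) :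
    netGap W1 ≤ netGap W0 := by
  classical
  obtain ⟨δ, hδdef⟩ : ∃ d : ℝ, d = W1 v0 v0 - W0 v0 v0 := ⟨_, rfl⟩
  have hδ : 0 < δ := by rw [hδdef]; linarith
  have hsumv : ∀ v, v ≠ v0 → (∑ x, W1 v x) = ∑ x, W0 v x := fun v hv =>
    Finset.sum_congr rfl fun x _ => (hagree v x fun h => hv h.1).symm
  have hsum0 : (∑ x, W1 v0 x) = (∑ x, W0 v0 x) + δ := by
    have h : ∑ x, (W1 v0 x - W0 v0 x) = δ := by
      rw [Finset.sum_eq_single v0]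
      · rw [hδdef]
      · intro x _ hx
        rw [hagree v0 x fun h => hx h.2]; ring
      · exact fun h => absurd (Finset.mem_univ v0) h
    rw [Finset.sum_sub_distrib] at h
    linarith
  have hpos1 : ∀ v, 0 < ∑ x, W1 v x := by
    intro v
    rcases eq_or_ne v v0 with rfl | hv
    · rw [hsum0]; linarith [hpos v]
    · rw [hsumv v hv]; exact hpos v
  have hgen : ∀ g : V → ℝ,
      ∑ v, (∑ x, W1 v x) * g v = (∑ v, (∑ x, W0 v x) * g v) + δ * g v0 := by
    intro g
    have h : ∑ v, ((∑ x, W1 v x) * g v - (∑ x, W0 v x) * g v) = δ * g v0 := by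
      rw [Finset.sum_eq_single v0]
      · rw [hsum0]; ring
      · intro v _ hv; rw [hsumv v hv]; ring
      · exact fun h => absurd (Finset.mem_univ v0) h
    rw [Finset.sum_sub_distrib] at h
    linarith
  have hQ : ∀ f : V → ℝ,
      ∑ v, ∑ u, W1 v u * f v * f u
        = (∑ v, ∑ u, W0 v u * f v * f u) + δ * f v0 * f v0 := by
    intro f
    have h : ∑ v, ((∑ u, W1 v u * f v * f u) - ∑ u, W0 v u * f v * f u)
        = δ * f v0 * f v0 := by
      rw [Finset.sum_eq_single v0]
      · rw [← Finset.sum_sub_distrib, Finset.sum_eq_single v0]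
        · rw [hδdef]; ring
        · intro u _ hu; rw [hagree v0 u fun h => hu h.2]; ring
        · exact fun h => absurd (Finset.mem_univ v0) h
      · intro v _ hv
        rw [← Finset.sum_sub_distrib]
        apply Finset.sum_eq_zero
        intro u _
        rw [hagree v u fun h => hv h.1]
        ring
      · exact fun h => absurd (Finset.mem_univ v0) h
    rw [Finset.sum_sub_distrib] at h
    linarith
  have main_le : sSup (rayleigh (netP W0) fun v => ∑ x, W0 v x)
      ≤ sSup (rayleigh (netP W1) fun v => ∑ x, W1 v x) := by
    rcases Set.eq_empty_or_nonempty (rayleigh (netP W0) fun v => ∑ x, W0 v x) with h0 | h0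
    · -- if the Rayleigh set of W0 is empty, so is that of W1
      have h1e : rayleigh (netP W1) (fun v => ∑ x, W1 v x) = ∅ := by
        rw [Set.eq_empty_iff_forall_notMem]
        intro r hr
        rw [mem_ray_iff W1 hpos1] at hr
        obtain ⟨g, hg1, hg2, -⟩ := hr
        have hV : Nonempty V := by
          by_contra hV
          rw [not_nonempty_iff] at hV
          rw [Finset.univ_eq_empty, Finset.sum_empty] at hg2
          exact zero_ne_one hg2
        have hM0 : 0 < ∑ v, ∑ x, W0 v x :=
          Finset.sum_pos (fun v _ => hpos v) Finset.univ_nonempty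
        have hM1 : 0 < ∑ v, ∑ x, W1 v x :=
          Finset.sum_pos (fun v _ => hpos1 v) Finset.univ_nonempty
        obtain ⟨c, hcdef⟩ : ∃ c : ℝ, c = -(δ * g v0) / (∑ v, ∑ x, W0 v x) := ⟨_, rfl⟩
        have hs1 : ∑ v, (∑ x, W0 v x) * g v = -(δ * g v0) := by
          have h := hgen g
          rw [hg1] at h
          linarith
        have hS : ∑ v, (∑ x, W0 v x) * g v = c * ∑ v, ∑ x, W0 v x := by
          rw [hs1, hcdef]
          field_simp
        have hTnn : 0 ≤ ∑ v, (∑ x, W0 v x) * (g v - c) ^ 2 :=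
          Finset.sum_nonneg fun v _ => mul_nonneg (hpos v).le (sq_nonneg _)
        have hTpos : 0 < ∑ v, (∑ x, W0 v x) * (g v - c) ^ 2 := by
          rcases hTnn.lt_or_eq with h | h
          · exact h
          · exfalso
            have hzero := (Finset.sum_eq_zero_iff_of_nonneg
              (fun v _ => mul_nonneg (hpos v).le (sq_nonneg _))).mp h.symm
            have hconst : ∀ v, g v = c := by
              intro v
              have hz := hzero v (Finset.mem_univ v)
              rcases mul_eq_zero.mp hz with h' | h'
              · exact absurd h' (hpos v).ne'
              · have hz2 := sq_eq_zero_iff.mp h'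
                linarith [hz2]
            have hcsum : ∑ v, (∑ x, W1 v x) * g v = (∑ v, ∑ x, W1 v x) * c := by
              rw [Finset.sum_mul]
              exact Finset.sum_congr rfl fun v _ => by rw [hconst v]
            rw [hg1] at hcsum
            have hc0 : c = 0 := by
              rcases mul_eq_zero.mp hcsum.symm with h' | h'
              · exact absurd h' hM1.ne'
              · exact h'
            have hzero2 : ∑ v, (∑ x, W1 v x) * g v ^ 2 = 0 :=
              Finset.sum_eq_zero fun v _ => by rw [hconst v, hc0]; ring
            rw [hzero2] at hg2
            exact zero_ne_one hg2
        obtain ⟨t, htdef⟩ : ∃ t : ℝ,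
            t = Real.sqrt (∑ v, (∑ x, W0 v x) * (g v - c) ^ 2) := ⟨_, rfl⟩
        have htpos : 0 < t := htdef ▸ Real.sqrt_pos.mpr hTpos
        have ht2 : t ^ 2 = ∑ v, (∑ x, W0 v x) * (g v - c) ^ 2 :=
          htdef ▸ Real.sq_sqrt hTnn
        obtain ⟨hf1, hf2⟩ := feas_normalize (fun v => ∑ x, W0 v x) g c t hS ht2 htpos
        have hmem : (∑ v, ∑ u, W0 v u * ((g v - c) / t) * ((g u - c) / t))
            ∈ rayleigh (netP W0) (fun v => ∑ x, W0 v x) :=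
          (mem_ray_iff W0 hpos _).mpr ⟨fun v => (g v - c) / t, hf1, hf2, rfl⟩
        rw [h0] at hmem
        exact hmem
      rw [h0, h1e]
    · refine csSup_le h0 fun r hr => ?_
      rw [mem_ray_iff W0 hpos] at hr
      obtain ⟨f, h1, h2, h3⟩ := hr
      have hV : Nonempty V := by
        by_contra hV
        rw [not_nonempty_iff] at hV
        rw [Finset.univ_eq_empty, Finset.sum_empty] at h2
        exact zero_ne_one h2
      have hM1 : 0 < ∑ v, ∑ x, W1 v x :=
        Finset.sum_pos (fun v _ => hpos1 v) Finset.univ_nonempty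
      have hM0 : 0 < ∑ v, ∑ x, W0 v x :=
        Finset.sum_pos (fun v _ => hpos v) Finset.univ_nonempty
      obtain ⟨M1, hM1def⟩ : ∃ M : ℝ, M = ∑ v, ∑ x, W1 v x := ⟨_, rfl⟩
      obtain ⟨a, hadef⟩ : ∃ a : ℝ, a = f v0 := ⟨_, rfl⟩
      obtain ⟨c, hcdef⟩ : ∃ c : ℝ, c = δ * a / M1 := ⟨_, rfl⟩
      have hM1pos : 0 < M1 := hM1def ▸ hM1
      have hMsum : M1 = (∑ v, ∑ x, W0 v x) + δ := by
        rw [hM1def]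
        have h := hgen (fun _ => 1)
        simpa using h
      have hs1 : ∑ v, (∑ x, W1 v x) * f v = δ * a := by
        rw [hgen f, h1, hadef]; ring
      have hs2 : ∑ v, (∑ x, W1 v x) * f v ^ 2 = 1 + δ * a ^ 2 := by
        have h := hgen (fun v => f v ^ 2)
        rw [h, h2, hadef]
      obtain ⟨T, hTdef⟩ : ∃ T : ℝ, T = 1 + δ * a ^ 2 - δ ^ 2 * a ^ 2 / M1 := ⟨_, rfl⟩
      have hT1 : 1 ≤ T := by
        rw [hTdef]
        have hdiv : δ ^ 2 * a ^ 2 / M1 ≤ δ * a ^ 2 := by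
          rw [div_le_iff₀ hM1pos]
          nlinarith [mul_nonneg (mul_nonneg hδ.le (sq_nonneg a)) hM0.le]
        linarith
      have hTsum : ∑ v, (∑ x, W1 v x) * (f v - c) ^ 2 = T := by
        have expand : ∀ v, (∑ x, W1 v x) * (f v - c) ^ 2
            = (∑ x, W1 v x) * f v ^ 2 - 2 * c * ((∑ x, W1 v x) * f v)
              + c ^ 2 * (∑ x, W1 v x) := fun v => by ring
        rw [Finset.sum_congr rfl fun v _ => expand v, Finset.sum_add_distrib,
          Finset.sum_sub_distrib, ← Finset.mul_sum, ← Finset.mul_sum, hs1, hs2,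
          ← hM1def, hTdef, hcdef]
        field_simp
        ring
      obtain ⟨t, htdef⟩ : ∃ t : ℝ, t = Real.sqrt T := ⟨_, rfl⟩
      have htpos : 0 < t := by
        rw [htdef]; exact Real.sqrt_pos.mpr (by linarith)
      have ht2 : t ^ 2 = T := by
        rw [htdef]; exact Real.sq_sqrt (by linarith)
      have htsum : t ^ 2 = ∑ v, (∑ x, W1 v x) * (f v - c) ^ 2 := by rw [ht2, hTsum]
      obtain ⟨hg1, hg2⟩ := feas_normalize (fun v => ∑ x, W1 v x) f c t
        (by rw [hs1, ← hM1def, hcdef]; field_simp) htsum htpos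
      have hmem : (∑ v, ∑ u, W1 v u * ((f v - c) / t) * ((f u - c) / t))
          ∈ rayleigh (netP W1) (fun v => ∑ x, W1 v x) :=
        (mem_ray_iff W1 hpos1 _).mpr ⟨fun v => (f v - c) / t, hg1, hg2, rfl⟩
      have hscale : (∑ v, ∑ u, W1 v u * ((f v - c) / t) * ((f u - c) / t)) * T
          = ∑ v, ∑ u, W1 v u * (f v - c) * (f u - c) := by
        rw [← ht2, Finset.sum_mul]
        refine Finset.sum_congr rfl fun v _ => ?_
        rw [Finset.sum_mul]
        refine Finset.sum_congr rfl fun u _ => ?_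
        have ht0 : t ≠ 0 := htpos.ne'
        have key : ((f v - c) / t) * ((f u - c) / t) * t ^ 2 = (f v - c) * (f u - c) := by
          rw [div_mul_div_comm, sq, div_mul_cancel₀ _ (mul_ne_zero ht0 ht0)]
        calc W1 v u * ((f v - c) / t) * ((f u - c) / t) * t ^ 2
            = W1 v u * (((f v - c) / t) * ((f u - c) / t) * t ^ 2) := by ring
          _ = W1 v u * ((f v - c) * (f u - c)) := by rw [key]
          _ = W1 v u * (f v - c) * (f u - c) := by ring
      have hval : (∑ v, ∑ u, W1 v u * ((f v - c) / t) * ((f u - c) / t)) * T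
          = (∑ v, ∑ u, W0 v u * f v * f u) + T - 1 := by
        rw [hscale, Q_shift W1 hsym1 f c, hs1, ← hM1def, hQ f, ← hadef, hcdef, hTdef]
        field_simp
        ring
      have hQ0le : (∑ v, ∑ u, W0 v u * f v * f u) ≤ 1 := by
        calc (∑ v, ∑ u, W0 v u * f v * f u) ≤ ∑ v, (∑ x, W0 v x) * f v ^ 2 :=
              Q_le_sum W0 hsym0 hnn0 f
          _ = 1 := h2
      have hT0 : (0:ℝ) < T := by linarith
      have hle : r ≤ ∑ v, ∑ u, W1 v u * ((f v - c) / t) * ((f u - c) / t) := by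
        rw [h3]
        nlinarith [hval, hT1, hQ0le, hT0,
          mul_nonneg (sub_nonneg.2 hT1) (sub_nonneg.2 hQ0le)]
      exact hle.trans (le_csSup (ray_bddAbove W1 hsym1 hnn1 hpos1) hmem)
  simp only [netGap, matGap]
  linarith


end Paper
end
end

section
/- For any ε, α ∈ (0,1) and any β > 0, if G = (V,E) is a finite graph and 𝒫′ is a partition of V, then there exists an (ε,α,β)-good coarsening of 𝒫′. -/
/-!
Let `θ₀ = ε` and `θ_{t+1} = θ_t² α / ℓ²`, and let `H_t = H(𝒫', θ_t β)`. The thresholds decrease,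
so the graphs `H_t` grow and their number of components can drop at most `ℓ` times; hence for
some `T ≤ ℓ` the graphs `H_T` and `H_{T+1}` have the same components. Coarsen `𝒫'` along the
components of `H_T` and take `θ = θ_T`: each part is connected in `H_T`, and two parts of `𝒫'` in
different components are not adjacent in `H_{T+1}`, so at most `ℓ² θ_{T+1} β = θ_T² α β` edges
leave any part.
-/

open scoped Classical

noncomputable section

namespace Paper

variable {V : Type} [Fintype V]

/-- The number of edges of `G` between the (disjoint) vertex sets `A` and `B`. -/
def eBetween (G : SimpleGraph V) (A B : Finset V) : ℕ :=
  ((A ×ˢ B).filter fun p => G.Adj p.1 p.2).card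

/-- `Vs` is a partition of the vertex set into (nonempty) sets. -/
def IsPartition {k : ℕ} (Vs : Fin k → Finset V) : Prop :=
  (∀ v : V, ∃! i, v ∈ Vs i) ∧ ∀ i, (Vs i).Nonempty

/-- The graph `H(𝒬,c)` on the parts of `𝒬`: `i` and `j` are joined iff
`|E(U_i,U_j)| > c`. -/
def partGraph (G : SimpleGraph V) {m : ℕ} (Us : Fin m → Finset V) (c : ℝ) :
    SimpleGraph (Fin m) :=
  SimpleGraph.fromRel fun i j => c < (eBetween G (Us i) (Us j) : ℝ)

/-- `Vs` is a coarsening of `Us`: every set of `Vs` is a union of sets of `Us`. -/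
def IsCoarsening {k ℓ : ℕ} (Vs : Fin k → Finset V) (Us : Fin ℓ → Finset V) : Prop :=
  ∀ i, ∃ J : Finset (Fin ℓ), Vs i = J.biUnion Us

/-- `Vs` is an `(ε,α,β)`-good coarsening of the partition `Us` (with `ℓ` parts):
it is a partition, a coarsening of `Us`, and there exists
`θ ∈ [ε(εα/ℓ²)^(2^ℓ), ε]` such that (1) for every part `V_i` the graph `H(𝒫_i, θβ)` on
the parts of `Us` contained in `V_i` is connected, and (2) `|E(V_i, V∖V_i)| ≤ θ²βα`. -/
def IsGoodCoarsening [DecidableEq V] (G : SimpleGraph V) (ε α β : ℝ) {k ℓ : ℕ}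
    (Us : Fin ℓ → Finset V) (Vs : Fin k → Finset V) : Prop :=
  IsPartition Vs ∧ IsCoarsening Vs Us ∧
  ∃ θ : ℝ, ε * (ε * α / (ℓ : ℝ) ^ 2) ^ (2 ^ ℓ : ℕ) ≤ θ ∧ θ ≤ ε ∧
    (∀ i, ((partGraph G Us (θ * β)).induce {j | Us j ⊆ Vs i}).Connected) ∧
    (∀ i, (eBetween G (Vs i) (Vs i)ᶜ : ℝ) ≤ θ ^ 2 * β * α)

end Paper

theorem Antitone.exists_le_apply_succ_eq {c : ℕ → ℕ} (hc : Antitone c) :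
    ∃ T ≤ c 0, c (T + 1) = c T := by
  by_contra! hne
  have hdrop : ∀ t ≤ c 0 + 1, c t + t ≤ c 0 := by
    intro t
    induction t with
    | zero => simp
    | succ t ih =>
      intro ht
      have hlt : c (t + 1) < c t := (hc t.le_succ).lt_of_ne (hne t (by omega))
      have := ih (by omega)
      omega
  have := hdrop (c 0 + 1) le_rfl
  omega

namespace SimpleGraph

theorem exists_reachable_succ_le_of_monotone {W : Type*} [Finite W] {H : ℕ → SimpleGraph W}
    (hH : Monotone H) : ∃ T ≤ Nat.card W, (H (T + 1)).Reachable ≤ (H T).Reachable := by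
  obtain ⟨T, hT, hcard⟩ :=
    Antitone.exists_le_apply_succ_eq (c := fun t => Nat.card (H t).ConnectedComponent)
      fun s t hst => ConnectedComponent.card_le_card_of_le (hH hst)
  have hbij := (Nat.bijective_iff_surjective_and_card _).mpr
    ⟨ConnectedComponent.surjective_map_ofLE (hH T.le_succ), hcard.symm⟩
  refine ⟨T, hT.trans (Nat.card_le_card_of_surjective _ fun C => C.exists_rep), ?_⟩
  intro u v huv
  refine ConnectedComponent.exact (hbij.injective ?_)
  simpa only [ConnectedComponent.map_mk, Hom.ofLE_apply] using ConnectedComponent.sound huv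

end SimpleGraph

namespace Paper

variable {V : Type}

lemma eBetween_mono_right (G : SimpleGraph V) {A B B' : Finset V} (h : B ⊆ B') :
    eBetween G A B ≤ eBetween G A B' :=
  Finset.card_le_card (Finset.filter_subset_filter _ (Finset.product_subset_product_right h))

lemma eBetween_biUnion_le [DecidableEq V] (G : SimpleGraph V) {ι κ : Type*} (J : Finset ι)
    (J' : Finset κ) (A : ι → Finset V) (B : κ → Finset V) :
    eBetween G (J.biUnion A) (J'.biUnion B) ≤ ∑ j ∈ J, ∑ j' ∈ J', eBetween G (A j) (B j') := by
  classical
  rw [← Finset.sum_product']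
  refine (Finset.card_le_card ?_).trans Finset.card_biUnion_le
  intro p hp
  simp only [Finset.mem_filter, Finset.mem_product, Finset.mem_biUnion] at hp ⊢
  obtain ⟨⟨⟨j, hj, hpA⟩, j', hj', hpB⟩, hadj⟩ := hp
  exact ⟨(j, j'), ⟨hj, hj'⟩, ⟨hpA, hpB⟩, hadj⟩

lemma partGraph_anti (G : SimpleGraph V) {m : ℕ} (Us : Fin m → Finset V) :
    Antitone (partGraph G Us) := by
  intro c c' hc i j hij
  simp only [partGraph, SimpleGraph.fromRel_adj] at hij ⊢
  exact ⟨hij.1, hij.2.imp hc.trans_lt hc.trans_lt⟩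

lemma eBetween_le_of_not_adj (G : SimpleGraph V) {m : ℕ} (Us : Fin m → Finset V) {c : ℝ}
    {i j : Fin m} (hij : i ≠ j) (h : ¬ (partGraph G Us c).Adj i j) :
    (eBetween G (Us i) (Us j) : ℝ) ≤ c := by
  simp only [partGraph, SimpleGraph.fromRel_adj, not_and, not_or, not_lt] at h
  exact (h hij).1

section Coarsening

variable [DecidableEq V] {k ℓ : ℕ} (Us : Fin ℓ → Finset V) (f : Fin ℓ → Fin k)

def coarsenBy (i : Fin k) : Finset V :=
  (Finset.univ.filter fun j => f j = i).biUnion Us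

lemma isCoarsening_coarsenBy : IsCoarsening (coarsenBy Us f) Us :=
  fun i => ⟨Finset.univ.filter fun j => f j = i, by ext; simp only [coarsenBy, Finset.mem_biUnion]⟩

variable {Us} (hUs : IsPartition Us)
include hUs

lemma mem_coarsenBy_iff {v : V} {j : Fin ℓ} (hv : v ∈ Us j) (i : Fin k) :
    v ∈ coarsenBy Us f i ↔ f j = i := by
  simp only [coarsenBy, Finset.mem_biUnion, Finset.mem_filter, Finset.mem_univ, true_and]
  exact ⟨fun ⟨j', hj', hv'⟩ => (hUs.1 v).unique hv hv' ▸ hj', fun hj => ⟨j, hj, hv⟩⟩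

lemma setOf_subset_coarsenBy (i : Fin k) : {j | Us j ⊆ coarsenBy Us f i} = {j | f j = i} := by
  ext j
  obtain ⟨v, hv⟩ := hUs.2 j
  exact ⟨fun h => (mem_coarsenBy_iff f hUs hv i).mp (h hv),
    fun hj w hw => (mem_coarsenBy_iff f hUs hw i).mpr hj⟩

lemma isPartition_coarsenBy (hf : Function.Surjective f) : IsPartition (coarsenBy Us f) := by
  refine ⟨fun v => ?_, fun i => ?_⟩
  · obtain ⟨j, hv, -⟩ := hUs.1 v
    exact ⟨f j, (mem_coarsenBy_iff f hUs hv _).mpr rfl,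
      fun i hi => ((mem_coarsenBy_iff f hUs hv i).mp hi).symm⟩
  · obtain ⟨j, rfl⟩ := hf i
    obtain ⟨v, hv⟩ := hUs.2 j
    exact ⟨v, (mem_coarsenBy_iff f hUs hv _).mpr rfl⟩

lemma compl_coarsenBy_subset [Fintype V] (i : Fin k) :
    (coarsenBy Us f i)ᶜ ⊆ (Finset.univ.filter fun j => f j ≠ i).biUnion Us := by
  intro v hv
  obtain ⟨j, hvj, -⟩ := hUs.1 v
  rw [Finset.mem_compl, mem_coarsenBy_iff f hUs hvj] at hv
  exact Finset.mem_biUnion.mpr ⟨j, Finset.mem_filter.mpr ⟨Finset.mem_univ j, hv⟩, hvj⟩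

lemma eBetween_coarsenBy_compl_le [Fintype V] (G : SimpleGraph V) {c : ℝ} (hc : 0 ≤ c)
    (h : ∀ j j', f j ≠ f j' → (eBetween G (Us j) (Us j') : ℝ) ≤ c) (i : Fin k) :
    (eBetween G (coarsenBy Us f i) (coarsenBy Us f i)ᶜ : ℝ) ≤ ℓ ^ 2 * c := by
  set J := Finset.univ.filter fun j => f j = i
  set J' := Finset.univ.filter fun j => f j ≠ i
  calc (eBetween G (coarsenBy Us f i) (coarsenBy Us f i)ᶜ : ℝ)
      ≤ ∑ j ∈ J, ∑ j' ∈ J', (eBetween G (Us j) (Us j') : ℝ) := by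
        exact_mod_cast (eBetween_mono_right G (compl_coarsenBy_subset f hUs i)).trans
          (eBetween_biUnion_le G J J' Us Us)
    _ ≤ ∑ j ∈ J, ∑ j' ∈ J', c := by
        refine Finset.sum_le_sum fun j hj => Finset.sum_le_sum fun j' hj' => h j j' ?_
        rw [(Finset.mem_filter.mp hj).2]
        exact Ne.symm (Finset.mem_filter.mp hj').2
    _ = J.card * J'.card * c := by simp only [Finset.sum_const, nsmul_eq_mul]; ring
    _ ≤ ℓ * ℓ * c := by gcongr <;> exact (Finset.card_le_univ _).trans_eq (Fintype.card_fin ℓ)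
    _ = ℓ ^ 2 * c := by ring

end Coarsening

section ComponentLabel

variable {ℓ : ℕ} (H : SimpleGraph (Fin ℓ))

def componentLabel (j : Fin ℓ) : Fin (Nat.card H.ConnectedComponent) :=
  Finite.equivFin _ (H.connectedComponentMk j)

lemma componentLabel_surjective : Function.Surjective (componentLabel H) :=
  (Finite.equivFin _).surjective.comp fun C => C.exists_rep

lemma componentLabel_eq_iff {j j' : Fin ℓ} :
    componentLabel H j = componentLabel H j' ↔ H.Reachable j j' := by
  simp only [componentLabel, EmbeddingLike.apply_eq_iff_eq, SimpleGraph.ConnectedComponent.eq]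

lemma connected_induce_componentLabel_eq (i : Fin (Nat.card H.ConnectedComponent)) :
    (H.induce {j | componentLabel H j = i}).Connected := by
  have hsupp : {j | componentLabel H j = i} = ((Finite.equivFin _).symm i).supp := by
    ext j
    rw [SimpleGraph.ConnectedComponent.mem_supp_iff, Equiv.eq_symm_apply]
    rfl
  rw [hsupp]
  exact ((Finite.equivFin _).symm i).connected_toSimpleGraph

end ComponentLabel

section Threshold

variable {ε α : ℝ}

/-- Closed form of the recursion `θ₀ = ε`, `θ_{t+1} = θ_t² α / ℓ²`. -/
def threshold (ε α : ℝ) (ℓ t : ℕ) : ℝ :=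
  ε * (ε * α / ℓ ^ 2) ^ (2 ^ t - 1)

lemma div_natCast_sq_le_self {x : ℝ} (hx : 0 ≤ x) (n : ℕ) : x / n ^ 2 ≤ x := by
  rcases Nat.eq_zero_or_pos n with rfl | hn
  · simpa using hx
  · exact div_le_self hx (one_le_pow₀ (Nat.one_le_cast.mpr hn))

lemma natCast_sq_mul_div_le_self {x : ℝ} (hx : 0 ≤ x) (n : ℕ) : (n : ℝ) ^ 2 * (x / n ^ 2) ≤ x := by
  rcases Nat.eq_zero_or_pos n with rfl | hn
  · simpa using hx
  · exact (mul_div_cancel₀ x (by positivity)).le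

variable (hε : 0 ≤ ε) (hα : 0 ≤ α)
include hε hα

lemma threshold_nonneg (ℓ t : ℕ) : 0 ≤ threshold ε α ℓ t := by
  unfold threshold
  positivity

lemma threshold_antitone (hεα : ε * α ≤ 1) (ℓ : ℕ) : Antitone (threshold ε α ℓ) := by
  intro s t hst
  refine mul_le_mul_of_nonneg_left (pow_le_pow_of_le_one (by positivity)
    ((div_natCast_sq_le_self (by positivity) ℓ).trans hεα) ?_) hε
  exact Nat.sub_le_sub_right (Nat.pow_le_pow_right two_pos hst) 1

lemma le_threshold (hεα : ε * α ≤ 1) {ℓ T : ℕ} (hT : T ≤ ℓ) :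
    ε * (ε * α / ℓ ^ 2) ^ (2 ^ ℓ) ≤ threshold ε α ℓ T := by
  refine mul_le_mul_of_nonneg_left (pow_le_pow_of_le_one (by positivity)
    ((div_natCast_sq_le_self (by positivity) ℓ).trans hεα) ?_) hε
  exact (Nat.sub_le _ 1).trans (Nat.pow_le_pow_right two_pos hT)

lemma natCast_sq_mul_threshold_succ_le (ℓ t : ℕ) :
    (ℓ : ℝ) ^ 2 * threshold ε α ℓ (t + 1) ≤ α * threshold ε α ℓ t ^ 2 := by
  set r := ε * α / ℓ ^ 2
  have hexp : 2 ^ (t + 1) - 1 = 2 * (2 ^ t - 1) + 1 := by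
    have := Nat.one_le_two_pow (n := t)
    rw [pow_succ]
    omega
  calc (ℓ : ℝ) ^ 2 * threshold ε α ℓ (t + 1) = (ℓ ^ 2 * r) * (ε * (r ^ (2 ^ t - 1)) ^ 2) := by
        rw [threshold, hexp]
        ring
    _ ≤ (ε * α) * (ε * (r ^ (2 ^ t - 1)) ^ 2) := by
        gcongr ?_ * _
        exact natCast_sq_mul_div_le_self (by positivity) ℓ
    _ = α * threshold ε α ℓ t ^ 2 := by
        rw [threshold]
        ring

end Threshold

variable [Fintype V]

/-- **Lemma 2.12.**  For any `ε, α ∈ (0,1)` and `β > 0`, every partition `𝒫'` of the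
vertex set of a finite graph admits an `(ε,α,β)`-good coarsening. -/
theorem exists_good_coarsening [DecidableEq V] (ε α β : ℝ)
    (hε : ε ∈ Set.Ioo (0 : ℝ) 1) (hα : α ∈ Set.Ioo (0 : ℝ) 1) (hβ : 0 < β)
    (G : SimpleGraph V) {ℓ : ℕ} (Us : Fin ℓ → Finset V) (hUs : IsPartition Us) :
    ∃ (k : ℕ) (Vs : Fin k → Finset V), IsGoodCoarsening G ε α β Us Vs := by
  obtain ⟨hε0, hε1⟩ := hε
  obtain ⟨hα0, hα1⟩ := hα
  have hεα : ε * α ≤ 1 := mul_le_one₀ hε1.le hα0.le hα1.le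
  set θ := threshold ε α ℓ
  set H : ℕ → SimpleGraph (Fin ℓ) := fun t => partGraph G Us (θ t * β)
  have hH : Monotone H := fun s t hst => partGraph_anti G Us
    (mul_le_mul_of_nonneg_right (threshold_antitone hε0.le hα0.le hεα ℓ hst) hβ.le)
  obtain ⟨T, hTℓ, hstable⟩ := SimpleGraph.exists_reachable_succ_le_of_monotone hH
  rw [Nat.card_fin] at hTℓ
  refine ⟨_, coarsenBy Us (componentLabel (H T)),
    isPartition_coarsenBy _ hUs (componentLabel_surjective _), isCoarsening_coarsenBy Us _,
    θ T, le_threshold hε0.le hα0.le hεα hTℓ,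
    (threshold_antitone hε0.le hα0.le hεα ℓ T.zero_le).trans_eq (by simp [threshold]),
    fun i => ?_, fun i => ?_⟩
  · rw [setOf_subset_coarsenBy _ hUs]
    exact connected_induce_componentLabel_eq (H T) i
  · have hcross : ∀ j j', componentLabel (H T) j ≠ componentLabel (H T) j' →
        (eBetween G (Us j) (Us j') : ℝ) ≤ θ (T + 1) * β := fun j j' hjj' => by
      rw [Ne, componentLabel_eq_iff] at hjj'
      exact eBetween_le_of_not_adj G Us (fun h => hjj' (h ▸ .rfl))
        fun hadj => hjj' (hstable j j' hadj.reachable)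
    calc (eBetween G _ _ : ℝ) ≤ ℓ ^ 2 * (θ (T + 1) * β) := eBetween_coarsenBy_compl_le _ hUs G
          (mul_nonneg (threshold_nonneg hε0.le hα0.le ℓ _) hβ.le) hcross i
      _ ≤ θ T ^ 2 * β * α := by
        nlinarith [natCast_sq_mul_threshold_succ_le hε0.le hα0.le ℓ T]

end Paper
end
end

section
/- Let δ ∈ (0,1], ε > 0, let G = (V,E) be a connected simple graph on n vertices with minimal degree at least δn, and let V = V₁ ⊔ … ⊔ V_k be an (ε,δ,n^{1.5})-good decomposition of G with parameter θ satisfying θε⁸√n > 1. Then there exists C = C(δ) < ∞ such that for any i ∈ [k] there exists a set V_i′ ⊆ V_i with |V_i′| ≥ δ⁴n/80 such that for every v ∈ V_i′, the random walk on the network G^ρ started at v satisfies P_v(τ_ρ < τ_{V∖V_i}) ≥ 1 − Cε², where τ_A denotes the hitting time of A. -/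
open scoped Classical

noncomputable section

namespace Paper

variable {V : Type} [Fintype V]

/-- The spectral gap `γ(G) = 1 - λ₂` of the simple random walk on `G`. -/
def gap (G : SimpleGraph V) : ℝ := matGap (transMat G) fun v => (deg G v : ℝ)

/-- The number of edges between `v` and the set `S`. -/
def degIn (G : SimpleGraph V) (v : V) (S : Finset V) : ℕ :=
  (S.filter fun u => G.Adj v u).card

/-- `Vs` is an `(ε,δ,β)`-good decomposition of `G`, with parameter `θ`. -/
def IsGoodDecompositionWith [DecidableEq V] (G : SimpleGraph V) (ε δ β : ℝ) {k : ℕ}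
    (Vs : Fin k → Finset V) (θ : ℝ) : Prop :=
  IsPartition Vs ∧
  ε ^ ((11 : ℝ) * (2 : ℝ) ^ ((2 : ℝ) / δ)) ≤ θ ∧ θ ≤ ε ∧
  (k : ℝ) ≤ 2 / δ ∧
  (∀ i, δ * (Fintype.card V : ℝ) / 2 ≤ ((Vs i).card : ℝ)) ∧
  (∀ i, δ ^ 15 * θ * β / (2 ^ 31 * (Fintype.card V : ℝ) ^ 2) ≤
      gap (G.induce (↑(Vs i) : Set V))) ∧
  (∀ i, ∀ v ∈ Vs i, δ ^ 4 * (Fintype.card V : ℝ) / 40 ≤ (degIn G v (Vs i) : ℝ)) ∧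
  (∀ i, (eBetween G (Vs i) (Vs i)ᶜ : ℝ) ≤ ε ^ 9 * θ ^ 2 * β)

/-- One-step transition probabilities of the random walk on the network `G^ρ` (state
space `Option V`, where `none` is the added vertex `ρ`), from a vertex `v ∈ V`: the walk
moves to `ρ` with probability `q = θε⁴/√n` and to each neighbour of `v` in `G` with
probability `(1-q)/deg(v)` (this is the walk on `G` with edge weights `1` and
`w(v,ρ) = θε⁴ deg(v)/(√n - θε⁴)`). -/
def rhoStep (G : SimpleGraph V) (q : ℝ) (v : V) : Option V → ℝ
  | none => q
  | some u => if G.Adj v u then (1 - q) / (deg G v : ℝ) else 0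

/-- The probability of a given finite trajectory of the walk on `G^ρ`. -/
def chainProb (G : SimpleGraph V) (q : ℝ) : List (Option V) → ℝ
  | [] => 1
  | [_] => 1
  | none :: _ :: _ => 0
  | some v :: y :: l => rhoStep G q v y * chainProb G q (y :: l)

/-!
Write `S = V_i`, `q = θε⁴/√n` and `h(v) = P_v(τ_ρ < τ_{V∖S})`. Grouping trajectories by
length, `h(v) = ∑ₜ q(1-q)ᵗ sₜ(v)`, where `sₜ(v)` is the probability that the simple random
walk on `G` stays in `S` for `t` steps. Started from the degree-weighted measure on `S`, the
walk crosses the cut `E(S, Sᶜ)` at most `e(S, Sᶜ)` times per step in expectation, so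
`∑_{v∈S} deg v (1 - sₜ(v)) ≤ t e(S, Sᶜ)`, and averaging over the geometric time of the jump
to `ρ` gives `∑_{v∈S} deg v (1 - h(v)) ≤ e(S, Sᶜ)/q`. By Markov's inequality at most
`e(S, Sᶜ)/(q ε² δn) ≤ δ³n/16` vertices of `S` have `h(v) < 1 - ε²` once `ε ≤ δ/2`, which
leaves at least `δn/2 - δ³n/16 ≥ δ⁴n/80` good ones; for `ε > δ/2` the bound `1 - 4ε²/δ² < 0`
is trivial.
-/

open Finset

lemma sum_ofFn_fin_succ {α M : Type*} [Fintype α] [AddCommMonoid M] (F : List α → M) (t : ℕ) :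
    ∑ u : Fin (t + 1) → α, F (List.ofFn u) = ∑ x, ∑ u : Fin t → α, F (x :: List.ofFn u) := by
  rw [← Fintype.sum_prod_type', ← (Fin.consEquiv fun _ => α).sum_comp]
  simp [Fin.consEquiv, List.ofFn_succ]

lemma hasSum_mul_geometric_one_sub {q : ℝ} (hq0 : 0 < q) (hq1 : q ≤ 1) :
    HasSum (fun t : ℕ => q * (1 - q) ^ t) 1 := by
  have := (hasSum_geometric_of_lt_one (sub_nonneg.2 hq1) (by linarith)).mul_left q
  rwa [sub_sub_cancel, mul_inv_cancel₀ hq0.ne'] at this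

lemma le_one_of_rpow_le_self {x y : ℝ} (hy : 1 < y) (h : x ^ y ≤ x) : x ≤ 1 := by
  by_contra! hx
  exact (Real.rpow_one x ▸ Real.rpow_lt_rpow_of_exponent_lt hx hy).not_ge h

section SimpleRandomWalk

variable (G : SimpleGraph V) (S : Finset V)

lemma deg_eq_card_filter (v : V) : deg G v = (univ.filter (G.Adj v)).card := by
  have h : {u | G.Adj v u} = ↑(univ.filter (G.Adj v)) := by ext u; simp
  rw [deg, h, Nat.card_coe_set_eq, Set.ncard_coe_finset]

lemma deg_eq_card_filter_add_card_filter_compl [DecidableEq V] (v : V) :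
    deg G v = (S.filter (G.Adj v)).card + (Sᶜ.filter (G.Adj v)).card := by
  rw [deg_eq_card_filter, ← card_filter_add_card_filter_not (· ∈ S)]
  congr 2 <;> ext u <;> simp [and_comm]

/-- The probability that the simple random walk from `v` spends steps `1, …, t` in `S`
(`v` itself need not lie in `S`). -/
def stayProb : ℕ → V → ℝ
  | 0, _ => 1
  | t + 1, v => (deg G v : ℝ)⁻¹ * ∑ u ∈ S.filter (G.Adj v), stayProb t u

omit [Fintype V] in
lemma stayProb_nonneg : ∀ (t : ℕ) (v : V), 0 ≤ stayProb G S t v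
  | 0, _ => zero_le_one
  | t + 1, _ => mul_nonneg (by positivity) (sum_nonneg fun u _ => stayProb_nonneg t u)

lemma deg_mul_stayProb_succ (t : ℕ) (v : V) :
    deg G v * stayProb G S (t + 1) v = ∑ u ∈ S.filter (G.Adj v), stayProb G S t u := by
  rcases (deg G v).eq_zero_or_pos with h | h
  · have hnone : S.filter (G.Adj v) = ∅ := by
      rw [deg_eq_card_filter, card_eq_zero, filter_eq_empty_iff] at h
      exact filter_false_of_mem fun u _ => h (mem_univ u)
    simp [hnone, h]
  · rw [stayProb, ← mul_assoc, mul_inv_cancel₀ (by positivity), one_mul]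

lemma stayProb_le_one : ∀ (t : ℕ) (v : V), stayProb G S t v ≤ 1
  | 0, _ => le_rfl
  | t + 1, v => by
    rcases (deg G v).eq_zero_or_pos with h | h
    · simp [stayProb, h]
    · have hdeg : (0 : ℝ) < deg G v := by exact_mod_cast h
      rw [← mul_le_mul_iff_of_pos_left hdeg, deg_mul_stayProb_succ, mul_one]
      calc ∑ u ∈ S.filter (G.Adj v), stayProb G S t u
          ≤ ∑ _u ∈ S.filter (G.Adj v), (1 : ℝ) := sum_le_sum fun u _ => stayProb_le_one t u
        _ ≤ deg G v := by
          rw [sum_const, nsmul_one, deg_eq_card_filter]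
          exact_mod_cast card_le_card (filter_subset_filter _ (subset_univ S))

lemma eBetween_compl_eq_sum [DecidableEq V] :
    (eBetween G S Sᶜ : ℝ) = ∑ v ∈ S, ((Sᶜ.filter (G.Adj v)).card : ℝ) := by
  rw [eBetween, card_filter, sum_product]
  push_cast
  exact sum_congr rfl fun v _ => by rw [card_filter]; push_cast; rfl

lemma sum_sum_adj_le_sum_deg_mul {f : V → ℝ} (hf : ∀ u ∈ S, 0 ≤ f u) :
    ∑ v ∈ S, ∑ u ∈ S.filter (G.Adj v), f u ≤ ∑ u ∈ S, deg G u * f u := by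
  rw [sum_comm' (t' := S) (s' := fun u => S.filter (G.Adj · u)) (by simp; tauto)]
  refine sum_le_sum fun u hu => ?_
  rw [sum_const, nsmul_eq_mul]
  refine mul_le_mul_of_nonneg_right ?_ (hf u hu)
  rw [deg_eq_card_filter]
  exact_mod_cast card_le_card fun w hw => by simpa [G.adj_comm] using (mem_filter.1 hw).2

lemma deg_mul_one_sub_stayProb_succ [DecidableEq V] (t : ℕ) (v : V) :
    deg G v * (1 - stayProb G S (t + 1) v) =
      (Sᶜ.filter (G.Adj v)).card + ∑ u ∈ S.filter (G.Adj v), (1 - stayProb G S t u) := by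
  rw [mul_sub, mul_one, deg_mul_stayProb_succ, sum_sub_distrib, sum_const, nsmul_one,
    deg_eq_card_filter_add_card_filter_compl G S]
  push_cast
  ring

lemma sum_deg_mul_one_sub_stayProb_le [DecidableEq V] :
    ∀ t : ℕ, ∑ v ∈ S, deg G v * (1 - stayProb G S t v) ≤ t * eBetween G S Sᶜ
  | 0 => by simp [stayProb]
  | t + 1 => by
    calc ∑ v ∈ S, deg G v * (1 - stayProb G S (t + 1) v)
        = eBetween G S Sᶜ + ∑ v ∈ S, ∑ u ∈ S.filter (G.Adj v), (1 - stayProb G S t u) := by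
          simp only [deg_mul_one_sub_stayProb_succ, sum_add_distrib, eBetween_compl_eq_sum]
      _ ≤ eBetween G S Sᶜ + ∑ u ∈ S, deg G u * (1 - stayProb G S t u) :=
          add_le_add le_rfl <| sum_sum_adj_le_sum_deg_mul G S fun u _ =>
            sub_nonneg.2 (stayProb_le_one G S t u)
      _ ≤ eBetween G S Sᶜ + t * eBetween G S Sᶜ :=
          add_le_add le_rfl (sum_deg_mul_one_sub_stayProb_le t)
      _ = (t + 1 : ℕ) * eBetween G S Sᶜ := by push_cast; ring

lemma summable_mul_geometric_mul_stayProb {q : ℝ} (hq0 : 0 < q) (hq1 : q ≤ 1) (v : V) :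
    Summable fun t => q * (1 - q) ^ t * stayProb G S t v :=
  (hasSum_mul_geometric_one_sub hq0 hq1).summable.of_nonneg_of_le
    (fun t => mul_nonneg (by have := sub_nonneg.2 hq1; positivity) (stayProb_nonneg G S t v))
    fun t => mul_le_of_le_one_right (by have := sub_nonneg.2 hq1; positivity)
      (stayProb_le_one G S t v)

end SimpleRandomWalk

section RhoWalk

variable (G : SimpleGraph V)

omit [Fintype V] in
lemma rhoStep_nonneg {q : ℝ} (hq0 : 0 ≤ q) (hq1 : q ≤ 1) (v : V) (y : Option V) :
    0 ≤ rhoStep G q v y := by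
  cases y with
  | none => exact hq0
  | some u =>
    simp only [rhoStep]
    split_ifs
    exacts [div_nonneg (by linarith) (by positivity), le_rfl]

omit [Fintype V] in
lemma chainProb_nonneg {q : ℝ} (hq0 : 0 ≤ q) (hq1 : q ≤ 1) :
    ∀ l : List (Option V), 0 ≤ chainProb G q l
  | [] | [_] => zero_le_one
  | none :: _ :: _ => le_rfl
  | some v :: y :: l =>
    mul_nonneg (rhoStep_nonneg G hq0 hq1 v y) (chainProb_nonneg hq0 hq1 (y :: l))

variable [DecidableEq V] (S : Finset V) (q : ℝ)

def rhoPathWeight (v : V) (l : List V) : ℝ :=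
  if l.head? = some v ∧ ∀ u ∈ l, u ∈ S then chainProb G q (l.map some ++ [none]) else 0

/-- `P_v(τ_ρ < τ_{V ∖ S})` for the walk on `G^ρ` that jumps to `ρ` with probability `q`. -/
def hitRhoProb (v : V) : ℝ := ∑' l, rhoPathWeight G S q v l

variable {q}

lemma rhoPathWeight_nonneg (hq0 : 0 ≤ q) (hq1 : q ≤ 1) (v : V) (l : List V) :
    0 ≤ rhoPathWeight G S q v l := by
  unfold rhoPathWeight
  split_ifs
  exacts [chainProb_nonneg G hq0 hq1 _, le_rfl]

variable (q)

lemma rhoPathWeight_cons_of_ne {v x : V} (h : x ≠ v) (l : List V) :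
    rhoPathWeight G S q v (x :: l) = 0 := by
  simp [rhoPathWeight, h]

lemma rhoPathWeight_cons_cons (v x : V) (l : List V) :
    rhoPathWeight G S q v (v :: x :: l) =
      (if v ∈ S then rhoStep G q v (some x) else 0) * rhoPathWeight G S q x (x :: l) := by
  by_cases hv : v ∈ S <;> by_cases hx : x ∈ S <;> by_cases hl : ∀ u ∈ l, u ∈ S <;>
    simp [rhoPathWeight, chainProb, hv, hx, hl]

lemma sum_rhoPathWeight_cons (t : ℕ) (v : V) :
    ∑ u : Fin t → V, rhoPathWeight G S q v (v :: List.ofFn u) =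
      if v ∈ S then q * (1 - q) ^ t * stayProb G S t v else 0 := by
  induction t generalizing v with
  | zero => by_cases hv : v ∈ S <;> simp [rhoPathWeight, chainProb, rhoStep, stayProb, hv]
  | succ t ih =>
    rw [sum_ofFn_fin_succ fun l => rhoPathWeight G S q v (v :: l)]
    simp only [rhoPathWeight_cons_cons, ← mul_sum, ih]
    split_ifs with hv
    · simp only [rhoStep, stayProb, ite_mul, zero_mul, mul_ite, mul_zero]
      rw [← sum_filter, ← sum_filter, filter_mem_eq_inter, univ_inter, mul_sum, mul_sum]
      exact sum_congr rfl fun u _ => by ring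
    · simp

lemma sum_rhoPathWeight_ofFn (t : ℕ) {v : V} (hv : v ∈ S) :
    ∑ u : Fin (t + 1) → V, rhoPathWeight G S q v (List.ofFn u) =
      q * (1 - q) ^ t * stayProb G S t v := by
  rw [sum_ofFn_fin_succ, Fintype.sum_eq_single v fun x hx => sum_eq_zero fun u _ =>
    rhoPathWeight_cons_of_ne G S q hx _, sum_rhoPathWeight_cons, if_pos hv]

variable {q}

lemma hasSum_hitRhoProb (hq0 : 0 < q) (hq1 : q ≤ 1) {v : V} (hv : v ∈ S) :
    HasSum (fun t => q * (1 - q) ^ t * stayProb G S t v) (hitRhoProb G S q v) := by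
  have hs := summable_mul_geometric_mul_stayProb G S hq0 hq1 v
  suffices h : HasSum (rhoPathWeight G S q v) (∑' t, q * (1 - q) ^ t * stayProb G S t v) by
    rw [hitRhoProb, h.tsum_eq]
    exact hs.hasSum
  let f : (Σ n, Fin n → V) → ℝ := fun p => rhoPathWeight G S q v (List.ofFn p.2)
  let g : ℕ → ℝ := fun n => ∑ u : Fin n → V, f ⟨n, u⟩
  have hg : HasSum g (∑' t, q * (1 - q) ^ t * stayProb G S t v) := by
    refine (hasSum_nat_add_iff' 1).1 ?_
    have hnil : g 0 = 0 := by simp [g, f, rhoPathWeight]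
    simpa only [g, f, sum_rhoPathWeight_ofFn G S q _ hv, sum_range_one, hnil, sub_zero]
      using hs.hasSum
  have hf : Summable f := (summable_sigma_of_nonneg fun p =>
    rhoPathWeight_nonneg G S hq0.le hq1 v _).2
      ⟨fun n => (hasSum_fintype _).summable, by simpa only [tsum_fintype] using hg.summable⟩
  exact List.equivSigmaTuple.symm.hasSum_iff.1
    (hg.sigma_of_hasSum (fun n => hasSum_fintype _) hf)

lemma hasSum_one_sub_hitRhoProb (hq0 : 0 < q) (hq1 : q ≤ 1) {v : V} (hv : v ∈ S) :
    HasSum (fun t => q * (1 - q) ^ t * (1 - stayProb G S t v)) (1 - hitRhoProb G S q v) := by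
  simpa only [mul_sub, mul_one] using
    (hasSum_mul_geometric_one_sub hq0 hq1).sub (hasSum_hitRhoProb G S hq0 hq1 hv)

lemma hitRhoProb_le_one (hq0 : 0 < q) (hq1 : q ≤ 1) {v : V} (hv : v ∈ S) :
    hitRhoProb G S q v ≤ 1 :=
  sub_nonneg.1 <| (hasSum_one_sub_hitRhoProb G S hq0 hq1 hv).nonneg fun t =>
    mul_nonneg (by have := sub_nonneg.2 hq1; positivity) (sub_nonneg.2 (stayProb_le_one G S t v))

lemma hitRhoProb_nonneg (hq0 : 0 < q) (hq1 : q ≤ 1) {v : V} (hv : v ∈ S) :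
    0 ≤ hitRhoProb G S q v :=
  (hasSum_hitRhoProb G S hq0 hq1 hv).nonneg fun t =>
    mul_nonneg (by have := sub_nonneg.2 hq1; positivity) (stayProb_nonneg G S t v)

lemma sum_deg_mul_one_sub_hitRhoProb_le (hq0 : 0 < q) (hq1 : q ≤ 1) :
    ∑ v ∈ S, deg G v * (1 - hitRhoProb G S q v) ≤ eBetween G S Sᶜ / q := by
  have hexit : HasSum (fun t => q * (1 - q) ^ t * ∑ v ∈ S, deg G v * (1 - stayProb G S t v))
      (∑ v ∈ S, deg G v * (1 - hitRhoProb G S q v)) := by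
    simp only [mul_sum]
    refine hasSum_sum fun v hv => ?_
    simpa only [mul_left_comm] using
      (hasSum_one_sub_hitRhoProb G S hq0 hq1 hv).mul_left (deg G v : ℝ)
  have hmean : HasSum (fun t : ℕ => q * (1 - q) ^ t * (t * eBetween G S Sᶜ))
      (eBetween G S Sᶜ * (1 - q) / q) := by
    have h := (hasSum_coe_mul_geometric_of_norm_lt_one (r := 1 - q)
      (by rw [Real.norm_of_nonneg (sub_nonneg.2 hq1)]; linarith)).mul_left (q * eBetween G S Sᶜ)
    rw [sub_sub_cancel] at h
    have hval : (eBetween G S Sᶜ : ℝ) * (1 - q) / q =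
        q * eBetween G S Sᶜ * ((1 - q) / q ^ 2) := by
      field_simp
    rw [hval]
    exact h.congr_fun fun t => by ring
  calc ∑ v ∈ S, deg G v * (1 - hitRhoProb G S q v)
      ≤ eBetween G S Sᶜ * (1 - q) / q :=
        hasSum_le (fun t => mul_le_mul_of_nonneg_left (sum_deg_mul_one_sub_stayProb_le G S t)
          (by have := sub_nonneg.2 hq1; positivity)) hexit hmean
    _ ≤ eBetween G S Sᶜ / q := by
      gcongr
      exact mul_le_of_le_one_right (by positivity) (by linarith)

lemma card_sub_le_card_filter_hitRhoProb (hq0 : 0 < q) (hq1 : q ≤ 1)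
    {a d : ℝ} (ha : 0 < a) (hd : 0 < d) (hdeg : ∀ v ∈ S, d ≤ deg G v) :
    (S.card : ℝ) - eBetween G S Sᶜ / (q * (a * d)) ≤
      (S.filter fun v => 1 - a ≤ hitRhoProb G S q v).card := by
  set B := S.filter fun v => ¬ 1 - a ≤ hitRhoProb G S q v
  have hB : (B.card : ℝ) * (a * d) ≤ eBetween G S Sᶜ / q := by
    calc (B.card : ℝ) * (a * d) ≤ ∑ v ∈ B, deg G v * (1 - hitRhoProb G S q v) := by
          rw [← nsmul_eq_mul]
          refine card_nsmul_le_sum _ _ _ fun v hv => ?_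
          obtain ⟨hvS, hbad⟩ := mem_filter.1 hv
          rw [mul_comm a]
          exact mul_le_mul (hdeg v hvS) (by linarith) ha.le (by positivity)
      _ ≤ ∑ v ∈ S, deg G v * (1 - hitRhoProb G S q v) :=
          sum_le_sum_of_subset_of_nonneg (filter_subset _ _) fun v hv _ =>
            mul_nonneg (by positivity) (sub_nonneg.2 (hitRhoProb_le_one G S hq0 hq1 hv))
      _ ≤ eBetween G S Sᶜ / q := sum_deg_mul_one_sub_hitRhoProb_le G S hq0 hq1
  have hcard := card_filter_add_card_filter_not (s := S) fun v => 1 - a ≤ hitRhoProb G S q v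
  rw [← div_div, ← le_div_iff₀ (by positivity)] at *
  rw [← hcard]
  push_cast
  linarith

end RhoWalk

lemma mul_pow_four_div_sqrt_mem_Ioc {n ε θ : ℝ} (hn : 1 ≤ n) (hθ : 0 < θ) (hθε : θ ≤ ε)
    (hε1 : ε ≤ 1) : θ * ε ^ 4 / √n ∈ Set.Ioc 0 1 := by
  have hε : 0 < ε := hθ.trans_le hθε
  refine ⟨by positivity, (div_le_one (by positivity)).2 ?_⟩
  calc θ * ε ^ 4 ≤ 1 * 1 := by gcongr; exacts [hθε.trans hε1, pow_le_one₀ hε.le hε1]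
    _ ≤ √n := by rw [one_mul]; exact Real.one_le_sqrt.2 hn

lemma pow_four_mul_div_le_half_sub_cut_div {n δ ε θ e : ℝ} (hn : 0 < n) (hδ1 : δ ≤ 1)
    (hε : 0 < ε) (hθ : 0 < θ) (hθε : θ ≤ ε) (hεδ : ε ≤ δ / 2)
    (he : e ≤ ε ^ 9 * θ ^ 2 * n ^ ((3 : ℝ) / 2)) :
    δ ^ 4 * n / 80 ≤ δ * n / 2 - e / (θ * ε ^ 4 / √n * (ε ^ 2 * (δ * n))) := by
  have hδ : 0 < δ := by linarith
  have hsmall : ε ^ 3 * θ ≤ δ ^ 4 / 16 :=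
    calc ε ^ 3 * θ ≤ ε ^ 3 * ε := by gcongr
      _ = ε ^ 4 := by ring
      _ ≤ (δ / 2) ^ 4 := by gcongr
      _ = δ ^ 4 / 16 := by ring
  have hcut : e / (θ * ε ^ 4 / √n * (ε ^ 2 * (δ * n))) ≤ δ ^ 3 * n / 16 := by
    obtain ⟨s, hs, rfl⟩ : ∃ s, 0 < s ∧ n = s ^ 2 :=
      ⟨√n, by positivity, (Real.sq_sqrt hn.le).symm⟩
    have hpow : (s ^ 2) ^ ((3 : ℝ) / 2) = s ^ 3 := by
      rw [← Real.rpow_natCast, ← Real.rpow_mul hs.le]; norm_num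
    rw [Real.sqrt_sq hs.le, div_le_iff₀ (by positivity)]
    calc e ≤ ε ^ 9 * θ ^ 2 * s ^ 3 := hpow ▸ he
      _ = (ε ^ 3 * θ) * (θ * ε ^ 6 * s ^ 3) := by ring
      _ ≤ δ ^ 4 / 16 * (θ * ε ^ 6 * s ^ 3) := by gcongr
      _ = δ ^ 3 * s ^ 2 / 16 * (θ * ε ^ 4 / s * (ε ^ 2 * (δ * s ^ 2))) := by field_simp
  have hδ3 : δ ^ 3 ≤ δ := pow_le_of_le_one hδ.le hδ1 (by norm_num)
  have hδ4 : δ ^ 4 ≤ δ := pow_le_of_le_one hδ.le hδ1 (by norm_num)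
  nlinarith

/-- **Claim 3.7.**  For any `δ ∈ (0,1]` there is `C = C(δ) < ∞` such that the following
holds.  Let `V = V₁ ⊔ … ⊔ V_k` be an `(ε,δ,n^{1.5})`-good decomposition with parameter
`θ` (with `θ ε⁸ √n > 1`) of a connected simple graph `G` with minimal degree `≥ δn`.
For every `i` there is a set `V_i' ⊆ V_i` with `|V_i'| ≥ δ⁴n/80` such that for every
`v ∈ V_i'` the walk on `G^ρ` started at `v` hits `ρ` before leaving `V_i` with
probability at least `1 - Cε²`  (the probability `P_v(τ_ρ < τ_{V∖V_i})` is written as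
the sum, over trajectories staying in `V_i` and then jumping to `ρ`, of their
probabilities). -/
theorem hit_rho_before_leaving (δ : ℝ) (hδ : δ ∈ Set.Ioc (0 : ℝ) 1) :
    ∃ C : ℝ, 0 < C ∧
      ∀ (V : Type) [Fintype V] [DecidableEq V] (G : SimpleGraph V), G.Connected →
        ∀ ε θ : ℝ, 0 < ε →
        (∀ v : V, δ * (Fintype.card V : ℝ) ≤ (deg G v : ℝ)) →
        ∀ (k : ℕ) (Vs : Fin k → Finset V),
          IsGoodDecompositionWith G ε δ ((Fintype.card V : ℝ) ^ ((3 : ℝ) / 2)) Vs θ →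
          1 < θ * ε ^ 8 * Real.sqrt (Fintype.card V) →
          ∀ i : Fin k, ∃ V' : Finset V, V' ⊆ Vs i ∧
            δ ^ 4 * (Fintype.card V : ℝ) / 80 ≤ (V'.card : ℝ) ∧
            ∀ v ∈ V',
              1 - C * ε ^ 2 ≤
                ∑' l : List V,
                  if l.head? = some v ∧ ∀ u ∈ l, u ∈ Vs i then
                    chainProb G (θ * ε ^ 4 / Real.sqrt (Fintype.card V))
                      (l.map some ++ [none])
                  else 0 := by
  obtain ⟨hδ0, hδ1⟩ := hδ
  refine ⟨4 / δ ^ 2, by positivity, fun V _ _ G _ ε θ hε hdeg k Vs hgood _ i => ?_⟩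
  obtain ⟨⟨-, hne⟩, hθlb, hθε, -, hcard, -, -, hcut⟩ := hgood
  set n : ℝ := (Fintype.card V : ℝ)
  have hn : 1 ≤ n := Nat.one_le_cast.2 ((hne i).card_pos.trans_le (card_le_univ _))
  have hθ : 0 < θ := (Real.rpow_pos_of_pos hε _).trans_le hθlb
  have hε1 : ε ≤ 1 := le_one_of_rpow_le_self (by
    nlinarith [Real.one_le_rpow (by norm_num : (1 : ℝ) ≤ 2) (by positivity : 0 ≤ 2 / δ)])
    (hθlb.trans hθε)
  obtain ⟨hq0, hq1⟩ := mul_pow_four_div_sqrt_mem_Ioc hn hθ hθε hε1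
  show ∃ V' ⊆ Vs i, δ ^ 4 * n / 80 ≤ (V'.card : ℝ) ∧
    ∀ v ∈ V', 1 - 4 / δ ^ 2 * ε ^ 2 ≤ hitRhoProb G (Vs i) (θ * ε ^ 4 / √n) v
  by_cases hεδ : ε ≤ δ / 2
  · refine ⟨(Vs i).filter fun v => 1 - ε ^ 2 ≤ hitRhoProb G (Vs i) (θ * ε ^ 4 / √n) v,
      filter_subset _ _, ?_, fun v hv => le_trans ?_ (mem_filter.1 hv).2⟩
    · linarith [hcard i, card_sub_le_card_filter_hitRhoProb G (Vs i) hq0 hq1 (pow_pos hε 2)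
        (by positivity) fun v _ => hdeg v,
        pow_four_mul_div_le_half_sub_cut_div (by positivity) hδ1 hε hθ hθε hεδ (hcut i)]
    · have : 1 ≤ 4 / δ ^ 2 := by rw [le_div_iff₀ (by positivity)]; nlinarith
      nlinarith
  · refine ⟨Vs i, subset_rfl, ?_, fun v hv => le_trans ?_ (hitRhoProb_nonneg G (Vs i) hq0 hq1 hv)⟩
    · nlinarith [hcard i, pow_le_of_le_one hδ0.le hδ1 (by norm_num : 4 ≠ 0)]
    · rw [sub_nonpos, div_mul_eq_mul_div, le_div_iff₀ (by positivity)]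
      nlinarith

end Paper
end
end
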